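/- An s-uniform hypergraph H is such that every component has excess ≤ 0 (i.e. H is a disjoint union of trees and unicycles) if and only if every nonempty edge subset Ẽ satisfies |⋃_{e∈Ẽ} e| ≥ (s-1)|Ẽ|. -/

import Mathlib

/-- Two vertices lie in a common edge of `E`. -/
def SameEdge {α : Type*} (E : Finset (Finset α)) (x y : α) : Prop :=
  ∃ e ∈ E, x ∈ e ∧ y ∈ e

/-- `x` and `y` are connected by a chain of pairwise intersecting edges. -/
def Conn {α : Type*} (E : Finset (Finset α)) : α → α → Prop :=
  Relation.ReflTransGen (SameEdge E)

open scoped Classical in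
/-- The connected component of `x` inside the vertex set `Vs`. -/
noncomputable def component {α : Type*} (Vs : Finset α) (E : Finset (Finset α))
    (x : α) : Finset α :=
  Vs.filter fun y => Conn E x y

open scoped Classical in
/-- The edges belonging to the connected component of `x`. -/
noncomputable def compEdges {α : Type*} (Vs : Finset α) (E : Finset (Finset α))
    (x : α) : Finset (Finset α) :=
  E.filter fun e => e ⊆ component Vs E x

/-- The excess `ex(H) = (s-1)|E| - |V|` of an `s`-uniform hypergraph. -/
def excess {α : Type*} (s : ℕ) (Vs : Finset α) (E : Finset (Finset α)) : ℤ :=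
  ((s : ℤ) - 1) * E.card - Vs.card

set_option linter.unusedSectionVars false

section Aux
variable {α : Type*} [DecidableEq α] {Vs : Finset α} {E : Finset (Finset α)} {x : α}

lemma conn_symm {y : α} (h : Conn E x y) : Conn E y x := by
  unfold Conn at h ⊢
  induction h with
  | refl => exact Relation.ReflTransGen.refl
  | tail _ hst ih =>
    obtain ⟨e, he, ha, hb⟩ := hst
    exact Relation.ReflTransGen.head ⟨e, he, hb, ha⟩ ih

lemma mem_component_iff {y : α} :
    y ∈ component Vs E x ↔ y ∈ Vs ∧ Conn E x y := by
  simp [component]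

lemma mem_compEdges_iff {e : Finset α} :
    e ∈ compEdges Vs E x ↔ e ∈ E ∧ e ⊆ component Vs E x := by
  simp [compEdges]

lemma edge_subset_component (hE : ∀ e ∈ E, e ⊆ Vs) {e : Finset α} {y : α}
    (he : e ∈ E) (hy : y ∈ e) (hconn : Conn E x y) : e ⊆ component Vs E x := by
  intro z hz
  rw [mem_component_iff]
  exact ⟨hE e he hz, hconn.tail ⟨e, he, hy, hz⟩⟩

lemma edge_mem_compEdges (hE : ∀ e ∈ E, e ⊆ Vs) {e : Finset α} {y : α}
    (he : e ∈ E) (hy : y ∈ e) (hyC : y ∈ component Vs E x) :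
    e ∈ compEdges Vs E x := by
  rw [mem_compEdges_iff]
  exact ⟨he, edge_subset_component hE he hy (mem_component_iff.1 hyC).2⟩

/-- If `G` is a nonempty proper sub-collection of the edges of a component,
some remaining edge of the component meets the span of `G`. -/
lemma exists_touching {s : ℕ} (hs : 1 ≤ s) (hE : ∀ e ∈ E, e ⊆ Vs ∧ e.card = s)
    {G : Finset (Finset α)} (hG : G ⊆ compEdges Vs E x) (hGne : G.Nonempty)
    (hne : (compEdges Vs E x \ G).Nonempty) :
    ∃ e ∈ compEdges Vs E x \ G, (e ∩ G.biUnion id).Nonempty := by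
  by_contra hcon
  push_neg at hcon
  set S := G.biUnion id with hS
  have hE1 : ∀ e ∈ E, e ⊆ Vs := fun e he => (hE e he).1
  have hSC : S ⊆ component Vs E x := by
    intro v hv
    obtain ⟨g, hgG, hvg⟩ := Finset.mem_biUnion.1 hv
    exact (mem_compEdges_iff.1 (hG hgG)).2 hvg
  -- connectivity never leaves S
  have key : ∀ u w : α, Conn E u w → u ∈ S → w ∈ S := by
    intro u w hconn
    induction hconn with
    | refl => exact id
    | tail _ hstep ih =>
      intro hu
      have hz := ih hu
      obtain ⟨f, hfE, hzf, hwf⟩ := hstep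
      have hfF : f ∈ compEdges Vs E x := edge_mem_compEdges hE1 hfE hzf (hSC hz)
      by_cases hfG : f ∈ G
      · exact Finset.mem_biUnion.2 ⟨f, hfG, hwf⟩
      · exact absurd ⟨_, Finset.mem_inter.2 ⟨hzf, hz⟩⟩
          (Finset.not_nonempty_iff_eq_empty.2 (hcon f (Finset.mem_sdiff.2 ⟨hfF, hfG⟩)))
  obtain ⟨e', he'⟩ := hne
  have he'F := Finset.mem_sdiff.1 he'
  have he'E : e' ∈ E := (mem_compEdges_iff.1 he'F.1).1
  obtain ⟨w, hw⟩ := Finset.card_pos.1 (by rw [(hE e' he'E).2]; exact hs)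
  obtain ⟨g, hgG⟩ := hGne
  have hgE : g ∈ E := (mem_compEdges_iff.1 (hG hgG)).1
  obtain ⟨u, hu⟩ := Finset.card_pos.1 (by rw [(hE g hgE).2]; exact hs)
  have huS : u ∈ S := Finset.mem_biUnion.2 ⟨g, hgG, hu⟩
  have huC : u ∈ component Vs E x := hSC huS
  have hwC : w ∈ component Vs E x := (mem_compEdges_iff.1 he'F.1).2 hw
  have huw : Conn E u w :=
    (conn_symm (mem_component_iff.1 huC).2).trans (mem_component_iff.1 hwC).2
  exact absurd ⟨w, Finset.mem_inter.2 ⟨hw, key u w huw huS⟩⟩ (Finset.not_nonempty_iff_eq_empty.2 (hcon e' he'))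

lemma growth {s : ℕ} (hs : 1 ≤ s) (hE : ∀ e ∈ E, e ⊆ Vs ∧ e.card = s) :
    ∀ n : ℕ, ∀ G : Finset (Finset α), G ⊆ compEdges Vs E x → G.Nonempty →
      (compEdges Vs E x \ G).card = n →
      ((compEdges Vs E x).biUnion id).card ≤ (G.biUnion id).card + (s - 1) * n := by
  intro n
  induction n with
  | zero =>
    intro G hG _ hcard
    have : compEdges Vs E x = G :=
      Finset.Subset.antisymm
        (fun e he => by
          by_contra heG
          exact absurd (Finset.card_eq_zero.1 hcard ▸ Finset.mem_sdiff.2 ⟨he, heG⟩)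
            (Finset.notMem_empty e))
        hG
    simp [this]
  | succ n ih =>
    intro G hG hGne hcard
    have hne : (compEdges Vs E x \ G).Nonempty := by
      rw [← Finset.card_pos, hcard]; omega
    obtain ⟨e, heFG, hmeet⟩ := exists_touching hs hE hG hGne hne
    have heFG' := Finset.mem_sdiff.1 heFG
    have heE : e ∈ E := (mem_compEdges_iff.1 heFG'.1).1
    have hG' : insert e G ⊆ compEdges Vs E x := by
      intro f hf
      rcases Finset.mem_insert.1 hf with rfl | hf
      · exact heFG'.1
      · exact hG hf
    have hcard' : (compEdges Vs E x \ insert e G).card = n := by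
      have : compEdges Vs E x \ insert e G = (compEdges Vs E x \ G).erase e := by
        ext f
        simp [Finset.mem_sdiff, Finset.mem_erase, Finset.mem_insert]
        tauto
      rw [this, Finset.card_erase_of_mem heFG, hcard]
      omega
    have hstep := ih (insert e G) hG' ⟨e, Finset.mem_insert_self e G⟩ hcard'
    have hbu : (insert e G).biUnion id = e ∪ G.biUnion id := Finset.biUnion_insert
    have hsd : (e ∪ G.biUnion id).card ≤ (G.biUnion id).card + (s - 1) := by
      have h1 : (e \ G.biUnion id).card + (G.biUnion id).card
          = (e ∪ G.biUnion id).card := Finset.card_sdiff_add_card e _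
      have h2 : (e ∩ G.biUnion id).card + (e \ G.biUnion id).card = e.card :=
        Finset.card_inter_add_card_sdiff e _
      have h3 : 1 ≤ (e ∩ G.biUnion id).card := Finset.card_pos.2 hmeet
      have h4 : e.card = s := (hE e heE).2
      omega
    rw [hbu] at hstep
    have hmul : (s - 1) * (n + 1) = (s - 1) * n + (s - 1) := by ring
    omega

lemma component_subset_biUnion {s : ℕ} (hs : 1 ≤ s)
    (hE : ∀ e ∈ E, e ⊆ Vs ∧ e.card = s) (hx : x ∈ Vs)
    (hF : (compEdges Vs E x).Nonempty) :
    component Vs E x ⊆ (compEdges Vs E x).biUnion id := by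
  have hE1 : ∀ e ∈ E, e ⊆ Vs := fun e he => (hE e he).1
  have hxF : ∃ f ∈ compEdges Vs E x, x ∈ f := by
    obtain ⟨e', he'⟩ := hF
    have he'sub := (mem_compEdges_iff.1 he').2
    have he'E := (mem_compEdges_iff.1 he').1
    obtain ⟨v, hv⟩ : e'.Nonempty :=
      Finset.card_pos.1 (by rw [(hE e' he'E).2]; exact hs)
    have hvC := he'sub hv
    have hconn : Conn E x v := (mem_component_iff.1 hvC).2
    rcases (Relation.ReflTransGen.cases_head hconn) with rfl | ⟨z, hxz, _⟩
    · exact ⟨e', he', hv⟩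
    · obtain ⟨f, hfE, hxf, _⟩ := hxz
      exact ⟨f, edge_mem_compEdges hE1 hfE hxf
        (mem_component_iff.2 ⟨hx, Relation.ReflTransGen.refl⟩), hxf⟩
  intro y hy
  have hconn : Conn E x y := (mem_component_iff.1 hy).2
  rcases Relation.ReflTransGen.cases_tail hconn with rfl | ⟨z, hxz, hzy⟩
  · obtain ⟨f, hf, hxf⟩ := hxF
    exact Finset.mem_biUnion.2 ⟨f, hf, hxf⟩
  · obtain ⟨g, hgE, hzg, hyg⟩ := hzy
    have hzC : z ∈ component Vs E x := mem_component_iff.2 ⟨hE1 g hgE hzg, hxz⟩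
    exact Finset.mem_biUnion.2 ⟨g, edge_mem_compEdges hE1 hgE hzg hzC, hyg⟩

end Aux

section Aux2
variable {α : Type*} [DecidableEq α] {Vs : Finset α} {E : Finset (Finset α)} {x : α}

lemma perComp {s : ℕ} (hs : 1 ≤ s) (hE : ∀ e ∈ E, e ⊆ Vs ∧ e.card = s)
    (hx : x ∈ Vs)
    (hexc : excess s (component Vs E x) (compEdges Vs E x) ≤ 0)
    {G : Finset (Finset α)} (hG : G ⊆ compEdges Vs E x) (hGne : G.Nonempty) :
    ((s : ℤ) - 1) * G.card ≤ ((G.biUnion id).card : ℤ) := by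
  set F := compEdges Vs E x with hFdef
  have hE1 : ∀ e ∈ E, e ⊆ Vs := fun e he => (hE e he).1
  have hFne : F.Nonempty := hGne.mono hG
  have hCsub : component Vs E x ⊆ F.biUnion id :=
    component_subset_biUnion hs hE hx hFne
  have h1 : ((s : ℤ) - 1) * F.card ≤ ((F.biUnion id).card : ℤ) := by
    have := Finset.card_le_card hCsub
    unfold excess at hexc
    have : ((component Vs E x).card : ℤ) ≤ ((F.biUnion id).card : ℤ) := by
      exact_mod_cast this
    linarith
  have hgrow := growth hs hE (F \ G).card G hG hGne rfl
  have h2 : ((F.biUnion id).card : ℤ)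
      ≤ ((G.biUnion id).card : ℤ) + ((s : ℤ) - 1) * ((F \ G).card : ℤ) := by
    have hcast : (((s - 1 : ℕ)) : ℤ) = (s : ℤ) - 1 := by
      push_cast [Nat.cast_sub hs]; ring
    calc ((F.biUnion id).card : ℤ)
        ≤ (((G.biUnion id).card + (s - 1) * (F \ G).card : ℕ) : ℤ) := by
          exact_mod_cast hgrow
      _ = ((G.biUnion id).card : ℤ) + ((s : ℤ) - 1) * ((F \ G).card : ℤ) := by
          push_cast [hcast]; ring
  have h3 : (F.card : ℤ) = (G.card : ℤ) + ((F \ G).card : ℤ) := by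
    have := Finset.card_sdiff_add_card_eq_card hG
    push_cast [← this]; ring
  have h4 : ((s : ℤ) - 1) * F.card
      = ((s : ℤ) - 1) * G.card + ((s : ℤ) - 1) * ((F \ G).card : ℤ) := by
    rw [h3]; ring
  linarith

end Aux2

/-- For an `s`-uniform hypergraph `H = (Vs, E)`: every connected component has
excess at most `0` (i.e. `H` is a disjoint union of trees and unicycles) if and
only if every nonempty subset `Ẽ ⊆ E` of edges spans at least `(s-1)|Ẽ|`
vertices. -/
theorem stmt17 {α : Type*} [DecidableEq α] (s : ℕ) (hs : 1 ≤ s)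
    (Vs : Finset α) (E : Finset (Finset α))
    (hE : ∀ e ∈ E, e ⊆ Vs ∧ e.card = s) :
    (∀ x ∈ Vs, excess s (component Vs E x) (compEdges Vs E x) ≤ 0) ↔
      (∀ E' ⊆ E, E'.Nonempty →
        ((s : ℤ) - 1) * E'.card ≤ (E'.biUnion id).card) := by
  have hE1 : ∀ e ∈ E, e ⊆ Vs := fun e he => (hE e he).1
  constructor
  · intro hcomp
    have main : ∀ n : ℕ, ∀ E' ⊆ E, E'.card ≤ n → E'.Nonempty →
        ((s : ℤ) - 1) * E'.card ≤ ((E'.biUnion id).card : ℤ) := by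
      intro n
      induction n with
      | zero =>
        intro E' _ hc hne
        exact absurd (Finset.card_pos.2 hne) (by omega)
      | succ n ih =>
        intro E' hE'E hcard hne
        obtain ⟨e0, he0⟩ := hne
        have he0E : e0 ∈ E := hE'E he0
        obtain ⟨x, hx⟩ : e0.Nonempty :=
          Finset.card_pos.1 (by rw [(hE e0 he0E).2]; exact hs)
        have hxVs : x ∈ Vs := (hE e0 he0E).1 hx
        have hxC : x ∈ component Vs E x :=
          mem_component_iff.2 ⟨hxVs, Relation.ReflTransGen.refl⟩
        have he0F : e0 ∈ compEdges Vs E x := edge_mem_compEdges hE1 he0E hx hxC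
        set F := compEdges Vs E x with hFdef
        set G := E' ∩ F with hGdef
        set R := E' \ F with hRdef
        have hGsub : G ⊆ F := Finset.inter_subset_right
        have hGne : G.Nonempty := ⟨e0, Finset.mem_inter.2 ⟨he0, he0F⟩⟩
        have hdisj : Disjoint (G.biUnion id) (R.biUnion id) := by
          rw [Finset.disjoint_left]
          intro v hvG hvR
          obtain ⟨g, hg, hvg⟩ := Finset.mem_biUnion.1 hvG
          obtain ⟨r, hr, hvr⟩ := Finset.mem_biUnion.1 hvR
          have hvC : v ∈ component Vs E x := (mem_compEdges_iff.1 (hGsub hg)).2 hvg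
          have hrR := Finset.mem_sdiff.1 hr
          exact hrR.2 (edge_mem_compEdges hE1 (hE'E hrR.1) hvr hvC)
        have hsplit : E'.biUnion id = G.biUnion id ∪ R.biUnion id := by
          ext v
          simp only [Finset.mem_biUnion, Finset.mem_union, hGdef, hRdef,
            Finset.mem_inter, Finset.mem_sdiff, id]
          constructor
          · rintro ⟨e, he, hv⟩
            by_cases hF : e ∈ F
            · exact Or.inl ⟨e, ⟨he, hF⟩, hv⟩
            · exact Or.inr ⟨e, ⟨he, hF⟩, hv⟩
          · rintro (⟨e, ⟨he, _⟩, hv⟩ | ⟨e, ⟨he, _⟩, hv⟩) <;> exact ⟨e, he, hv⟩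
        have hcardsplit : (E'.card : ℤ) = (G.card : ℤ) + (R.card : ℤ) := by
          have := Finset.card_inter_add_card_sdiff E' F
          exact_mod_cast this.symm
        have hucard : ((E'.biUnion id).card : ℤ)
            = ((G.biUnion id).card : ℤ) + ((R.biUnion id).card : ℤ) := by
          rw [hsplit]
          exact_mod_cast Finset.card_union_of_disjoint hdisj
        have hGle : ((s : ℤ) - 1) * G.card ≤ ((G.biUnion id).card : ℤ) :=
          perComp hs hE hxVs (hcomp x hxVs) hGsub hGne
        have hRle : ((s : ℤ) - 1) * R.card ≤ ((R.biUnion id).card : ℤ) := by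
          rcases R.eq_empty_or_nonempty with hR | hRne
          · simp [hR]
          · have hRsub : R ⊆ E := fun r hr => hE'E (Finset.mem_sdiff.1 hr).1
            have hRss : R ⊂ E' :=
              Finset.ssubset_iff_of_subset Finset.sdiff_subset |>.2
                ⟨e0, he0, fun h => (Finset.mem_sdiff.1 h).2 he0F⟩
            have : R.card < E'.card := Finset.card_lt_card hRss
            exact ih R hRsub (by omega) hRne
        have hexpand : ((s : ℤ) - 1) * E'.card
            = ((s : ℤ) - 1) * G.card + ((s : ℤ) - 1) * R.card := by
          rw [hcardsplit]; ring
        linarith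
    intro E' hE'E hne
    exact main E'.card E' hE'E le_rfl hne
  · intro hspan x hxVs
    unfold excess
    rcases (compEdges Vs E x).eq_empty_or_nonempty with hF | hFne
    · rw [hF]
      simp
    · have h1 := hspan (compEdges Vs E x)
        (fun e he => (mem_compEdges_iff.1 he).1) hFne
      have hsub : (compEdges Vs E x).biUnion id ⊆ component Vs E x := by
        intro v hv
        obtain ⟨e, he, hve⟩ := Finset.mem_biUnion.1 hv
        exact (mem_compEdges_iff.1 he).2 hve
      have h2 : (((compEdges Vs E x).biUnion id).card : ℤ)
          ≤ ((component Vs E x).card : ℤ) := by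
        exact_mod_cast Finset.card_le_card hsub
      linarith
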